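/- Let G be a directed graph, s a source, t a vertex, and suppose G is transformed into H by: subdividing every edge (x,y) into a path (x, ℓ_{x,y}, r_{x,y}, y), and replacing each vertex y ∉ {s,t} having in-neighbours x_1,…,x_p and out-neighbours z_1,…,z_q by p binary trees, where the tree for x_i has root r_{x_i,y} and leaves ℓ_{y,z_1},…,ℓ_{y,z_q}. Then maxflow(s,t,G) = maxflow(s,t,H), and in H every vertex other than s has out-degree at most 2. -/

import Mathlib

open Finset

/-- `p` is a nonempty directed path/walk (as a list of edges) from `s` to `t`
using only edges of `G`. -/
def IsPath {V : Type*} (G : Finset (V × V)) (s t : V) (p : List (V × V)) : Prop :=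
  p ≠ [] ∧ (∀ e ∈ p, e ∈ G) ∧ List.Chain' (fun e f => e.2 = f.1) p ∧
    p.head?.map Prod.fst = some s ∧ p.getLast?.map Prod.snd = some t

/-- `G` contains `r` pairwise edge-disjoint paths from `s` to `t` (unit capacities). -/
def EDP {V : Type*} (G : Finset (V × V)) (s t : V) (r : ℕ) : Prop :=
  ∃ ps : Fin r → List (V × V), (∀ i, IsPath G s t (ps i)) ∧
    ∀ i j, i ≠ j → ∀ e, e ∈ ps i → e ∉ ps j

/-- Max-flow with unit capacities: the maximum number of edge-disjoint `s`-`t` paths. -/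
noncomputable def maxFlow {V : Type*} (G : Finset (V × V)) (s t : V) : ℕ :=
  sSup {r | EDP G s t r}

/-- Directed reachability in the edge set `G`. -/
def Reach {V : Type*} (G : Finset (V × V)) (s t : V) : Prop :=
  Relation.ReflTransGen (fun a b => (a, b) ∈ G) s t

def inEdges {V : Type*} [DecidableEq V] (G : Finset (V × V)) (v : V) : Finset (V × V) :=
  G.filter fun e => e.2 = v

def outDeg {V : Type*} [DecidableEq V] (G : Finset (V × V)) (v : V) : ℕ :=
  (G.filter fun e => e.1 = v).card

/-- `H` is a `(lam, k)` fault-tolerant bounded-flow-preserver of `G` w.r.t. source `s`: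
for every set `F` of at most `k` failed edges and every vertex `t`, the `s`-`t` max-flow
of `H \ F` equals that of `G \ F` whenever the latter is at most `lam`, and is at least
`lam` otherwise. -/
def IsFTBFP {V : Type*} [DecidableEq V] (G H : Finset (V × V)) (s : V) (lam k : ℕ) : Prop :=
  H ⊆ G ∧ ∀ F : Finset (V × V), F.card ≤ k → ∀ t : V,
    (maxFlow (G \ F) s t ≤ lam → maxFlow (H \ F) s t = maxFlow (G \ F) s t) ∧
    (lam < maxFlow (G \ F) s t → lam ≤ maxFlow (H \ F) s t)

/-- `H` is a `j`-fault-tolerant reachability subgraph of `G` w.r.t. source `s`. -/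
def IsFTRS {V : Type*} [DecidableEq V] (G H : Finset (V × V)) (s : V) (j : ℕ) : Prop :=
  H ⊆ G ∧ ∀ F : Finset (V × V), F.card ≤ j → ∀ t : V,
    (Reach (H \ F) s t ↔ Reach (G \ F) s t)

def IsCut {V : Type*} (A : Finset V) (s t : V) : Prop := s ∈ A ∧ t ∉ A

/-- Number of edges of `G` from `A` to its complement. -/
def cutVal {V : Type*} [DecidableEq V] (G : Finset (V × V)) (A : Finset V) : ℕ :=
  (G.filter fun e => e.1 ∈ A ∧ e.2 ∉ A).card

def IsMinCut {V : Type*} [DecidableEq V] (G : Finset (V × V)) (s t : V) (A : Finset V) : Prop :=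
  IsCut A s t ∧ ∀ B : Finset V, IsCut B s t → cutVal G A ≤ cutVal G B

def IsCutS {V : Type*} (S : Finset V) (t : V) (A : Finset V) : Prop := S ⊆ A ∧ t ∉ A

def IsMinCutS {V : Type*} [DecidableEq V] (G : Finset (V × V)) (S : Finset V) (t : V)
    (A : Finset V) : Prop :=
  IsCutS S t A ∧ ∀ B : Finset V, IsCutS S t B → cutVal G A ≤ cutVal G B

/-- Farthest min-cut: the min-cut whose source side contains the source side of
every min-cut. -/
def IsFMC {V : Type*} [DecidableEq V] (G : Finset (V × V)) (S : Finset V) (t : V)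
    (A : Finset V) : Prop :=
  IsMinCutS G S t A ∧ ∀ B : Finset V, IsMinCutS G S t B → B ⊆ A

/-- Vertices outside `A` with an in-edge from `A`. -/
def outSet {V : Type*} [DecidableEq V] (G : Finset (V × V)) (A : Finset V) : Finset V :=
  (G.filter fun e => e.1 ∈ A ∧ e.2 ∉ A).image Prod.snd

open scoped Classical

/-- Vertices of the out-degree-reducing transformation of a graph on `V`:
original vertices, the subdivision vertices `ℓ_{x,y}` (`false`) and `r_{x,y}`
(`true`) of each edge `(x,y)`, and the spine nodes `(x, y, z)` of the binary tree
(a caterpillar, ordered by the linear order on `V`) replacing vertex `y` for its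
in-neighbour `x`, one spine node per out-neighbour `z` of `y`. -/
abbrev TW (V : Type*) := V ⊕ ((V × V) × Bool) ⊕ (V × V × V)

/-- Edges of the transformed graph: `s → ℓ_{s,y}`; `ℓ_{x,y} → r_{x,y}`;
`r_{x,y} → y` when `y ∈ {s,t}`; for `y ∉ {s,t}`, `r_{x,y}` enters the spine of the
binary tree `B_{x,y}` at the smallest out-neighbour of `y`, each spine node
`(x,y,z)` has an edge to the leaf `ℓ_{y,z}` and to the next spine node. -/
def transEdge {V : Type*} [LinearOrder V] (G : Finset (V × V)) (s t : V) :
    TW V × TW V → Prop := fun e =>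
  match e with
  | (Sum.inl a, Sum.inr (Sum.inl ((x, y), false))) =>
      a = s ∧ x = s ∧ (s, y) ∈ G
  | (Sum.inr (Sum.inl ((x, y), false)), Sum.inr (Sum.inl ((x2, y2), true))) =>
      x = x2 ∧ y = y2 ∧ (x, y) ∈ G
  | (Sum.inr (Sum.inl ((x, y), true)), Sum.inl b) =>
      b = y ∧ (y = s ∨ y = t) ∧ (x, y) ∈ G
  | (Sum.inr (Sum.inl ((x, y), true)), Sum.inr (Sum.inr (x2, y2, z))) =>
      x = x2 ∧ y = y2 ∧ y ≠ s ∧ y ≠ t ∧ (x, y) ∈ G ∧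
        (y, z) ∈ G ∧ ∀ z2, (y, z2) ∈ G → z ≤ z2
  | (Sum.inr (Sum.inr (x, y, z)), Sum.inr (Sum.inl ((y2, z2), false))) =>
      y = y2 ∧ z = z2 ∧ y ≠ s ∧ y ≠ t ∧ (x, y) ∈ G ∧ (y, z) ∈ G
  | (Sum.inr (Sum.inr (x, y, z)), Sum.inr (Sum.inr (x2, y2, z2))) =>
      x = x2 ∧ y = y2 ∧ y ≠ s ∧ y ≠ t ∧ (x, y) ∈ G ∧
        (y, z) ∈ G ∧ (y, z2) ∈ G ∧ z < z2 ∧ ∀ w, (y, w) ∈ G → z < w → z2 ≤ w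
  | _ => False

noncomputable def transGraph {V : Type*} [Fintype V] [LinearOrder V]
    (G : Finset (V × V)) (s t : V) : Finset (TW V × TW V) :=
  Finset.univ.filter (transEdge G s t)

/-! Every edge of the transformed graph `H` lies in the gadget of a single edge `(x, y)` of `G`:
the subdivision path `ℓ_{x,y} → r_{x,y}`, the spine of the tree of `y` entered from `x`, or the
edge `s → ℓ_{s,y}` (`TW.gadgetOwner`). An `s`-`t` walk of `G`, cut at its first arrival at `t`,
expands edge by edge into an `s`-`t` path of `H` that stays inside the gadgets of its own edges,
so edge-disjoint families remain edge-disjoint. Conversely, collapsing every gadget onto `G`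
(`TW.collapse`) contracts every edge of `H` to a point except the edges `ℓ_{x,y} → r_{x,y}`, each
of which is the unique preimage of `(x, y)`; so an `s`-`t` path of `H` projects to an `s`-`t`
walk of `G`, and disjointness is again preserved. For the degree bound, a vertex other than `s`
has at most one out-edge into a spine (the minimum, resp. successor, out-neighbour is unique)
and at most one out-edge elsewhere. -/

inductive IsWalk {V : Type*} (G : Finset (V × V)) : V → V → List (V × V) → Prop
  | nil (a : V) : IsWalk G a a []
  | cons {a b c : V} {p : List (V × V)} : (a, b) ∈ G → IsWalk G b c p → IsWalk G a c ((a, b) :: p)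

namespace IsWalk

variable {V : Type*} {G : Finset (V × V)}

theorem cons_iff {a c : V} {e : V × V} {p : List (V × V)} :
    IsWalk G a c (e :: p) ↔ e.1 = a ∧ e ∈ G ∧ IsWalk G e.2 c p := by
  constructor
  · rintro (_ | ⟨he, hp⟩)
    exact ⟨rfl, he, hp⟩
  · obtain ⟨x, y⟩ := e
    rintro ⟨rfl, he, hp⟩
    exact cons he hp

theorem single {a b : V} (h : (a, b) ∈ G) : IsWalk G a b [(a, b)] :=
  cons h (nil b)

theorem nil_iff {a c : V} : IsWalk G a c [] ↔ a = c :=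
  ⟨by rintro ⟨⟩; rfl, by rintro rfl; exact nil a⟩

theorem append {a b c : V} {p q : List (V × V)} (hp : IsWalk G a b p) (hq : IsWalk G b c q) :
    IsWalk G a c (p ++ q) := by
  induction hp with
  | nil => exact hq
  | cons he _ ih => exact cons he (ih hq)

theorem mem {a c : V} {p : List (V × V)} (hp : IsWalk G a c p) {e : V × V} (he : e ∈ p) :
    e ∈ G := by
  induction hp with
  | nil => simp at he
  | cons he' _ ih => rcases List.mem_cons.mp he with rfl | he <;> [exact he'; exact ih he]

theorem ne_nil {a c : V} {p : List (V × V)} (hp : IsWalk G a c p) (hac : a ≠ c) : p ≠ [] := by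
  rintro rfl
  exact hac (nil_iff.mp hp)

theorem exists_subwalk_no_edge_from_end {a c : V} {p : List (V × V)} (hp : IsWalk G a c p) :
    ∃ p', p' ⊆ p ∧ IsWalk G a c p' ∧ ∀ e ∈ p', e.1 ≠ c := by
  induction hp with
  | nil a => exact ⟨[], by simp, nil a, by simp⟩
  | @cons a b c p he _ ih =>
    obtain ⟨p', hsub, hp', hc⟩ := ih
    by_cases hac : a = c
    · exact ⟨[], by simp, hac ▸ nil a, by simp⟩
    · refine ⟨(a, b) :: p', List.cons_subset_cons _ hsub, cons he hp', ?_⟩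
      simpa [hac] using hc

end IsWalk

set_option linter.deprecated false in
theorem isPath_iff_isWalk {V : Type*} {G : Finset (V × V)} {s t : V} {p : List (V × V)} :
    IsPath G s t p ↔ p ≠ [] ∧ IsWalk G s t p := by
  induction p generalizing s with
  | nil => simp [IsPath]
  | cons e p ih =>
    cases p with
    | nil => simp [IsPath, IsWalk.cons_iff, IsWalk.nil_iff, List.Chain', and_comm, and_assoc]
    | cons e' p =>
      have := @ih e.2
      simp only [IsPath, List.Chain', List.isChain_cons_cons, List.forall_mem_cons,
        List.head?_cons, List.getLast?_cons_cons, Option.map_some, Option.some.injEq,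
        IsWalk.cons_iff, ne_eq, reduceCtorEq, not_false_eq_true, true_and] at this ⊢
      grind

section Maps

variable {V W : Type*} {G : Finset (V × V)} {H : Finset (W × W)}

theorem EDP.of_paths_map {a b : V} {a' b' : W} (π : W × W → V × V)
    (hpath : ∀ p, IsPath G a b p → ∃ q, IsPath H a' b' q ∧ ∀ e ∈ q, π e ∈ p) {r : ℕ}
    (h : EDP G a b r) : EDP H a' b' r := by
  obtain ⟨ps, hps, hdisj⟩ := h
  choose qs hqs hπ using fun i => hpath (ps i) (hps i)
  exact ⟨qs, hqs, fun i j hij e hei hej => hdisj i j hij _ (hπ i e hei) (hπ j e hej)⟩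

noncomputable def contractWalk (f : W → V) (q : List (W × W)) : List (V × V) :=
  q.filterMap fun e => if f e.1 = f e.2 then none else some (f e.1, f e.2)

theorem IsWalk.contract (f : W → V) (hf : ∀ e ∈ H, f e.1 ≠ f e.2 → (f e.1, f e.2) ∈ G)
    {a b : W} {q : List (W × W)} (hq : IsWalk H a b q) :
    IsWalk G (f a) (f b) (contractWalk f q) := by
  induction hq with
  | nil a => exact IsWalk.nil _
  | @cons a c b q he _ ih =>
    by_cases hac : f a = f c
    · simpa [contractWalk, hac] using ih
    · simpa [contractWalk, hac] using IsWalk.cons (hf _ he hac) ih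

theorem EDP.of_contract (f : W → V) (g : V × V → W × W)
    (hf : ∀ e ∈ H, f e.1 ≠ f e.2 → (f e.1, f e.2) ∈ G ∧ g (f e.1, f e.2) = e)
    {a b : W} (hab : f a ≠ f b) {r : ℕ} (h : EDP H a b r) : EDP G (f a) (f b) r := by
  obtain ⟨qs, hqs, hdisj⟩ := h
  have hwalk i : IsWalk G (f a) (f b) (contractWalk f (qs i)) :=
    (isPath_iff_isWalk.mp (hqs i)).2.contract f fun e he hne => (hf e he hne).1
  have hmem i {e : V × V} (he : e ∈ contractWalk f (qs i)) : g e ∈ qs i := by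
    obtain ⟨e', he', hfe'⟩ := List.mem_filterMap.mp he
    by_cases hc : f e'.1 = f e'.2
    · simp [hc] at hfe'
    · simp only [hc, if_false, Option.some.injEq] at hfe'
      rw [← hfe', (hf e' ((isPath_iff_isWalk.mp (hqs i)).2.mem he') hc).2]
      exact he'
  exact ⟨fun i => contractWalk f (qs i),
    fun i => isPath_iff_isWalk.mpr ⟨(hwalk i).ne_nil hab, hwalk i⟩,
    fun i j hij e hei hej => hdisj i j hij _ (hmem i hei) (hmem j hej)⟩

end Maps

namespace TW

variable {V : Type*}

abbrev left (x y : V) : TW V := Sum.inr (Sum.inl ((x, y), false))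
abbrev right (x y : V) : TW V := Sum.inr (Sum.inl ((x, y), true))
abbrev spine (x y z : V) : TW V := Sum.inr (Sum.inr (x, y, z))

/-- The last clause matches no edge of `transGraph G s t`. -/
def gadgetOwner : TW V × TW V → V × V
  | (Sum.inl _, Sum.inr (Sum.inl (g, _))) => g
  | (Sum.inr (Sum.inl (g, _)), _) => g
  | (Sum.inr (Sum.inr (x, y, _)), _) => (x, y)
  | (Sum.inl a, _) => (a, a)

def collapse : TW V → V
  | Sum.inl a => a
  | Sum.inr (Sum.inl ((x, _), false)) => x
  | Sum.inr (Sum.inl ((_, y), true)) => y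
  | Sum.inr (Sum.inr (_, y, _)) => y

def isSpine : TW V → Bool
  | Sum.inr (Sum.inr _) => true
  | _ => false

end TW

section TransGraph

open TW

variable {V : Type*} [Fintype V] [LinearOrder V] {G : Finset (V × V)} {s t : V}

theorem mem_transGraph {e : TW V × TW V} : e ∈ transGraph G s t ↔ transEdge G s t e := by
  simp [transGraph]

section Edges

variable {x y z : V}

theorem source_left_mem_transGraph (h : (s, y) ∈ G) :
    (Sum.inl s, left s y) ∈ transGraph G s t :=
  mem_transGraph.mpr ⟨rfl, rfl, h⟩

theorem left_right_mem_transGraph (h : (x, y) ∈ G) : (left x y, right x y) ∈ transGraph G s t :=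
  mem_transGraph.mpr ⟨rfl, rfl, h⟩

theorem right_vertex_mem_transGraph (hy : y = s ∨ y = t) (h : (x, y) ∈ G) :
    (right x y, Sum.inl y) ∈ transGraph G s t :=
  mem_transGraph.mpr ⟨rfl, hy, h⟩

theorem right_spine_mem_transGraph (hys : y ≠ s) (hyt : y ≠ t) (hxy : (x, y) ∈ G)
    (hyz : (y, z) ∈ G) (hmin : ∀ w, (y, w) ∈ G → z ≤ w) :
    (right x y, spine x y z) ∈ transGraph G s t :=
  mem_transGraph.mpr ⟨rfl, rfl, hys, hyt, hxy, hyz, hmin⟩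

theorem spine_left_mem_transGraph (hys : y ≠ s) (hyt : y ≠ t) (hxy : (x, y) ∈ G)
    (hyz : (y, z) ∈ G) : (spine x y z, left y z) ∈ transGraph G s t :=
  mem_transGraph.mpr ⟨rfl, rfl, hys, hyt, hxy, hyz⟩

theorem spine_spine_mem_transGraph {z' : V} (hys : y ≠ s) (hyt : y ≠ t) (hxy : (x, y) ∈ G)
    (hyz : (y, z) ∈ G) (hyz' : (y, z') ∈ G) (hzz' : z < z')
    (hnext : ∀ w, (y, w) ∈ G → z < w → z' ≤ w) :
    (spine x y z, spine x y z') ∈ transGraph G s t :=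
  mem_transGraph.mpr ⟨rfl, rfl, hys, hyt, hxy, hyz, hyz', hzz', hnext⟩

end Edges

theorem exists_walk_right_spine {x y z : V} (hxy : (x, y) ∈ G) (hys : y ≠ s) (hyt : y ≠ t)
    (hyz : (y, z) ∈ G) : ∃ q, IsWalk (transGraph G s t) (right x y) (spine x y z) q ∧
      ∀ e ∈ q, gadgetOwner e = (x, y) := by
  induction z using WellFoundedLT.induction with
  | _ z ih =>
  by_cases hmin : ∀ w, (y, w) ∈ G → z ≤ w
  · exact ⟨_, .single (right_spine_mem_transGraph hys hyt hxy hyz hmin), by simp [gadgetOwner]⟩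
  · set below := univ.filter fun w => (y, w) ∈ G ∧ w < z
    have hne : below.Nonempty := by
      push Not at hmin
      simpa [below, Finset.Nonempty] using hmin
    set z' := below.max' hne
    obtain ⟨hyz', hz'z⟩ : (y, z') ∈ G ∧ z' < z := (mem_filter.mp (max'_mem _ hne)).2
    have hnext : ∀ w, (y, w) ∈ G → z' < w → z ≤ w := fun w hw hz'w =>
      not_lt.mp fun hwz => (le_max' below w (by simp [below, hw, hwz])).not_gt hz'w
    obtain ⟨q, hq, hown⟩ := ih z' hz'z hyz'
    refine ⟨_, hq.append (.single
      (spine_spine_mem_transGraph hys hyt hxy hyz' hyz hz'z hnext)), ?_⟩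
    simp only [List.forall_mem_append, List.forall_mem_singleton]
    exact ⟨hown, rfl⟩

theorem exists_walk_right_left {x y z : V} (hxy : (x, y) ∈ G) (hyz : (y, z) ∈ G) (hyt : y ≠ t) :
    ∃ q, IsWalk (transGraph G s t) (right x y) (left y z) q ∧
      ∀ e ∈ q, gadgetOwner e = (x, y) ∨ gadgetOwner e = (y, z) := by
  by_cases hys : y = s
  · subst hys
    exact ⟨_, .cons (right_vertex_mem_transGraph (.inl rfl) hxy)
      (.single (source_left_mem_transGraph hyz)), by simp [gadgetOwner]⟩
  · obtain ⟨q, hq, hown⟩ := exists_walk_right_spine hxy hys hyt hyz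
    refine ⟨_, hq.append (.single (spine_left_mem_transGraph hys hyt hxy hyz)), ?_⟩
    simp only [List.forall_mem_append, List.forall_mem_singleton]
    exact ⟨fun e he => .inl (hown e he), .inl rfl⟩

theorem exists_walk_left {x y : V} {p : List (V × V)} (hp : IsWalk G y t p)
    (hpt : ∀ e ∈ p, e.1 ≠ t) (hxy : (x, y) ∈ G) :
    ∃ q, IsWalk (transGraph G s t) (left x y) (Sum.inl t) q ∧
      ∀ e ∈ q, gadgetOwner e = (x, y) ∨ gadgetOwner e ∈ p := by
  induction hp generalizing x with
  | nil =>
    exact ⟨_, .cons (left_right_mem_transGraph hxy)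
      (.single (right_vertex_mem_transGraph (.inr rfl) hxy)), by simp [gadgetOwner]⟩
  | @cons y z _ p hyz _ ih =>
    obtain ⟨q, hq, hown⟩ := ih (fun e he => hpt e (List.mem_cons_of_mem _ he)) hyz
    obtain ⟨c, hc, hcown⟩ := exists_walk_right_left hxy hyz (hpt _ List.mem_cons_self)
    refine ⟨_, .cons (left_right_mem_transGraph hxy) (hc.append hq), ?_⟩
    intro e he
    rcases List.mem_cons.mp he with rfl | he
    · exact .inl rfl
    rcases List.mem_append.mp he with he | he
    · exact (hcown e he).imp_right fun h => List.mem_cons.mpr (.inl h)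
    · exact .inr (List.mem_cons.mpr (hown e he))

theorem exists_path_transGraph (hst : s ≠ t) {p : List (V × V)} (hp : IsPath G s t p) :
    ∃ q, IsPath (transGraph G s t) (Sum.inl s) (Sum.inl t) q ∧ ∀ e ∈ q, gadgetOwner e ∈ p := by
  obtain ⟨p', hp'p, hp', hp't⟩ := (isPath_iff_isWalk.mp hp).2.exists_subwalk_no_edge_from_end
  obtain ⟨⟨s', y⟩, p'', rfl⟩ := List.exists_cons_of_ne_nil (hp'.ne_nil hst)
  obtain ⟨rfl, hsy, hp''⟩ := IsWalk.cons_iff.mp hp'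
  obtain ⟨q, hq, hown⟩ :=
    exists_walk_left hp'' (fun e he => hp't e (List.mem_cons_of_mem _ he)) hsy
  refine ⟨_, isPath_iff_isWalk.mpr ⟨List.cons_ne_nil _ _,
    .cons (source_left_mem_transGraph hsy) hq⟩, fun e he => hp'p ?_⟩
  rcases List.mem_cons.mp he with rfl | he
  · exact List.mem_cons_self
  · exact List.mem_cons.mpr (hown e he)

theorem eq_left_right_of_collapse_ne {e : TW V × TW V} (he : e ∈ transGraph G s t)
    (hne : collapse e.1 ≠ collapse e.2) :
    (collapse e.1, collapse e.2) ∈ G ∧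
      (left (collapse e.1) (collapse e.2), right (collapse e.1) (collapse e.2)) = e := by
  obtain ⟨u | ⟨⟨x, y⟩, _ | _⟩ | ⟨x, y, z⟩, v | ⟨⟨x', y'⟩, _ | _⟩ | ⟨x', y', z'⟩⟩ := e <;>
    simp only [mem_transGraph, transEdge, collapse] at he hne ⊢ <;> grind

theorem eq_of_isSpine_eq {w v v' : TW V} (hw : w ≠ Sum.inl s) (hv : (w, v) ∈ transGraph G s t)
    (hv' : (w, v') ∈ transGraph G s t) (h : isSpine v = isSpine v') : v = v' := by
  obtain u | ⟨⟨x, y⟩, _ | _⟩ | ⟨x, y, z⟩ := w <;>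
  obtain v | ⟨⟨x1, y1⟩, _ | _⟩ | ⟨x1, y1, z1⟩ := v <;>
  obtain v' | ⟨⟨x2, y2⟩, _ | _⟩ | ⟨x2, y2, z2⟩ := v' <;>
  simp only [mem_transGraph, transEdge, isSpine] at hw hv hv' h ⊢ <;> grind

theorem outDeg_transGraph_le_two {w : TW V} (hw : w ≠ Sum.inl s) :
    outDeg (transGraph G s t) w ≤ 2 := by
  have hinj : Set.InjOn (fun e : TW V × TW V => isSpine e.2)
      ((transGraph G s t).filter fun e => e.1 = w) := by
    rintro ⟨_, v⟩ he ⟨_, v'⟩ he' hkind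
    simp only [mem_coe, mem_filter] at he he'
    obtain ⟨hv, rfl⟩ := he
    obtain ⟨hv', rfl⟩ := he'
    rw [eq_of_isSpine_eq hw hv hv' hkind]
  unfold outDeg
  simpa using card_le_card_of_injOn _ (fun _ _ => mem_univ _) hinj

theorem edp_transGraph_iff (hst : s ≠ t) (r : ℕ) :
    EDP (transGraph G s t) (Sum.inl s) (Sum.inl t) r ↔ EDP G s t r :=
  ⟨EDP.of_contract (a := Sum.inl s) (b := Sum.inl t) collapse
      (fun g => (left g.1 g.2, right g.1 g.2)) (fun _ => eq_left_right_of_collapse_ne) hst,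
    EDP.of_paths_map gadgetOwner fun _ => exists_path_transGraph hst⟩

end TransGraph

/-- the transformation (edge subdivision plus binary-tree expansion of
every vertex other than `s` and `t`) preserves the `s`-`t` max-flow, and in the
transformed graph every vertex other than `s` has out-degree at most `2`. -/
theorem stmt_12 {V : Type*} [Fintype V] [LinearOrder V]
    (G : Finset (V × V)) (s t : V) (hst : s ≠ t) :
    maxFlow G s t = maxFlow (transGraph G s t) (Sum.inl s) (Sum.inl t) ∧
    ∀ w : TW V, w ≠ Sum.inl s → outDeg (transGraph G s t) w ≤ 2 :=
  ⟨congrArg sSup (Set.ext fun r => (edp_transGraph_iff hst r).symm),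
    fun _ => outDeg_transGraph_le_two⟩
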